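/- arXiv:0809.3948 — 2 statements merged into one kernel-verified Lean document; each statement's English description precedes it below -/
import Mathlib

section
/- Let d_1, …, d_M be pairwise commuting elements of an associative algebra and set T_a(u) = Σ_{k=1}^M P_{ak}/(u − d_k) (where for each k the d_k are scalars commuting with the matrix units and P_{ak} places the flip between the auxiliary space a and the k-th quantum space). Then for all admissible u, v: [T_a(u), T_b(v)] = [T_a(u) + T_b(v), P_{ab}/(u−v)]. -/
open PiTensorProduct
open scoped TensorProduct

variable (N M : ℕ)

/-- The tensor product of two auxiliary copies of `ℂ^N` (indexed by `Fin 2`)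
and `M` quantum copies of `ℂ^N` (indexed by `Fin M`). -/
abbrev TotSp (N M : ℕ) := ⨂[ℂ] _ : (Fin 2 ⊕ Fin M), (Fin N → ℂ)

/-- The flip `P_{xy}` between tensor factors `x` and `y`. -/
noncomputable def flipP (N M : ℕ) (x y : Fin 2 ⊕ Fin M) : Module.End ℂ (TotSp N M) :=
  (PiTensorProduct.reindex ℂ (fun _ : Fin 2 ⊕ Fin M => (Fin N → ℂ)) (Equiv.swap x y)).toLinearMap

/-- The monodromy matrix `T_a(u) = Σ_{k=1}^M P_{ak}/(u - d_k)` in auxiliary space `a`,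
with scalar Dunkl-type elements `d_k`. -/
noncomputable def monoT (N M : ℕ) (d : Fin M → ℂ) (a : Fin 2) (u : ℂ) :
    Module.End ℂ (TotSp N M) :=
  ∑ k : Fin M, (u - d k)⁻¹ • flipP N M (Sum.inl a) (Sum.inr k)

/-!
Expanding both brackets, the terms `⁅P_{ak}, P_{bl}⁆` with `k ≠ l` vanish since disjoint
transpositions commute, so the identity splits into one identity per site `k`. For distinct
`a, b, c` the brackets `⁅P_{ab}, P_{bc}⁆`, `⁅P_{bc}, P_{ca}⁆`, `⁅P_{ca}, P_{ab}⁆` coincide (each is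
the difference of the two 3-cycles on `{a, b, c}`), which reduces the per-site identity to the
partial fraction decomposition of `(u - d)⁻¹ (v - d)⁻¹`. Only relations in the symmetric group
are used, so the argument runs for any representation `Equiv.Perm α →* A` in a `K`-algebra.
-/

namespace PiTensorProduct

variable (R : Type*) [CommSemiring R] {ι : Type*} (M : Type*) [AddCommMonoid M] [Module R M]

noncomputable def permEnd : Equiv.Perm ι →* Module.End R (⨂[R] _ : ι, M) where
  toFun σ := (reindex R (fun _ ↦ M) σ).toLinearMap
  map_one' := by
    rw [Equiv.Perm.one_def, reindex_refl]
    rfl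
  map_mul' σ τ := by
    rw [Equiv.Perm.mul_def, ← reindex_trans]
    rfl

end PiTensorProduct

theorem Equiv.swap_mul_swap_eq_swap_mul_swap {α : Type*} [DecidableEq α] {a b c : α}
    (hab : a ≠ b) (hca : c ≠ a) :
    swap a b * swap b c = swap b c * swap c a := by
  rw [swap_mul_eq_mul_swap, swap_inv, swap_apply_of_ne_of_ne hab hca.symm, swap_apply_left,
    swap_comm a c]

section

attribute [local instance] LieRing.ofAssociativeRing

variable {α A : Type*} [DecidableEq α] [Ring A] (ρ : Equiv.Perm α →* A)

theorem lie_map_swap_of_disjoint {a b c d : α} (hca : c ≠ a) (hcb : c ≠ b) (hda : d ≠ a)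
    (hdb : d ≠ b) : ⁅ρ (Equiv.swap a b), ρ (Equiv.swap c d)⁆ = 0 := by
  rw [Ring.lie_def, ← map_mul, ← map_mul, Equiv.mul_swap_eq_swap_mul,
    Equiv.swap_apply_of_ne_of_ne hca hcb, Equiv.swap_apply_of_ne_of_ne hda hdb, sub_self]

theorem lie_map_swap_cycle {a b c : α} (hab : a ≠ b) (hca : c ≠ a) :
    ⁅ρ (Equiv.swap a b), ρ (Equiv.swap b c)⁆ = ⁅ρ (Equiv.swap b c), ρ (Equiv.swap c a)⁆ := by
  have h := Equiv.swap_mul_swap_eq_swap_mul_swap hab hca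
  have h' : Equiv.swap b c * Equiv.swap a b = Equiv.swap c a * Equiv.swap b c := by
    simpa only [mul_inv_rev, Equiv.swap_inv] using congrArg (·⁻¹) h
  rw [Ring.lie_def, Ring.lie_def, ← map_mul, ← map_mul, ← map_mul, ← map_mul, h, h']

theorem inv_sub_mul_inv_sub {K : Type*} [Field K] {u v d : K} (hu : u ≠ d) (hv : v ≠ d)
    (huv : u ≠ v) : (u - d)⁻¹ * (v - d)⁻¹ = (u - v)⁻¹ * ((v - d)⁻¹ - (u - d)⁻¹) := by
  field_simp [sub_ne_zero.mpr hu, sub_ne_zero.mpr hv, sub_ne_zero.mpr huv]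
  ring

variable {K : Type*} [Field K] [Algebra K A]

theorem inv_sub_smul_lie_map_swap {a b c : α} (hab : a ≠ b) (hbc : b ≠ c) (hca : c ≠ a)
    {u v d : K} (hu : u ≠ d) (hv : v ≠ d) (huv : u ≠ v) :
    ⁅(u - d)⁻¹ • ρ (Equiv.swap a c), (v - d)⁻¹ • ρ (Equiv.swap b c)⁆ =
      ⁅(u - d)⁻¹ • ρ (Equiv.swap a c) + (v - d)⁻¹ • ρ (Equiv.swap b c),
        (u - v)⁻¹ • ρ (Equiv.swap a b)⁆ := by
  set C := ⁅ρ (Equiv.swap a b), ρ (Equiv.swap b c)⁆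
  have hac : ⁅ρ (Equiv.swap a c), ρ (Equiv.swap a b)⁆ = C := by
    rw [Equiv.swap_comm a c, lie_map_swap_cycle ρ hca hbc]
  have hbc' : ⁅ρ (Equiv.swap a c), ρ (Equiv.swap b c)⁆ = -C := by
    rw [← lie_skew, Equiv.swap_comm a c, ← lie_map_swap_cycle ρ hab hca]
  have hba : ⁅ρ (Equiv.swap b c), ρ (Equiv.swap a b)⁆ = -C := (lie_skew _ _).symm
  simp only [add_lie, smul_lie, lie_smul (R := K) (L := A), hac, hbc', hba]
  linear_combination (norm := module) -(inv_sub_mul_inv_sub hu hv huv) • C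

theorem lie_sum_inv_sub_smul_map_swap {κ : Type*} {s : κ → α} (hs : Function.Injective s)
    (t : Finset κ) {a b : α} (hab : a ≠ b) (ha : ∀ k, s k ≠ a) (hb : ∀ k, s k ≠ b) (d : κ → K)
    {u v : K} (hu : ∀ k, u ≠ d k) (hv : ∀ k, v ≠ d k) (huv : u ≠ v) :
    ⁅∑ k ∈ t, (u - d k)⁻¹ • ρ (Equiv.swap a (s k)),
        ∑ k ∈ t, (v - d k)⁻¹ • ρ (Equiv.swap b (s k))⁆ =
      ⁅∑ k ∈ t, (u - d k)⁻¹ • ρ (Equiv.swap a (s k)) +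
          ∑ k ∈ t, (v - d k)⁻¹ • ρ (Equiv.swap b (s k)),
        (u - v)⁻¹ • ρ (Equiv.swap a b)⁆ := by
  have cross : ∀ k l, l ≠ k →
      ⁅(u - d k)⁻¹ • ρ (Equiv.swap a (s k)), (v - d l)⁻¹ • ρ (Equiv.swap b (s l))⁆ = 0 := by
    intro k l hlk
    rw [smul_lie, lie_smul (R := K) (L := A),
      lie_map_swap_of_disjoint ρ hab.symm (hb k).symm (ha l) (hs.ne hlk), smul_zero, smul_zero]
  rw [sum_lie_sum, add_lie, sum_lie, sum_lie, ← Finset.sum_add_distrib]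
  refine Finset.sum_congr rfl fun k hk => ?_
  rw [Finset.sum_eq_single_of_mem k hk fun l _ hlk => cross k l hlk, ← add_lie]
  exact inv_sub_smul_lie_map_swap ρ hab (hb k).symm (ha k) (hu k) (hv k) huv

end

theorem flipP_eq_permEnd (x y : Fin 2 ⊕ Fin M) :
    flipP N M x y = PiTensorProduct.permEnd ℂ (Fin N → ℂ) (Equiv.swap x y) :=
  rfl

theorem monoT_eq_sum_permEnd (d : Fin M → ℂ) (a : Fin 2) (u : ℂ) :
    monoT N M d a u =
      ∑ k, (u - d k)⁻¹ •
        PiTensorProduct.permEnd ℂ (Fin N → ℂ) (Equiv.swap (Sum.inl a) (Sum.inr k)) :=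
  rfl

theorem stmt11 (d : Fin M → ℂ) (u v : ℂ)
    (hu : ∀ k, u ≠ d k) (hv : ∀ k, v ≠ d k) (huv : u ≠ v) :
    ⁅monoT N M d 0 u, monoT N M d 1 v⁆ =
      ⁅monoT N M d 0 u + monoT N M d 1 v,
        (u - v)⁻¹ • flipP N M (Sum.inl 0) (Sum.inl 1)⁆ := by
  rw [monoT_eq_sum_permEnd, monoT_eq_sum_permEnd, flipP_eq_permEnd]
  have h := lie_sum_inv_sub_smul_map_swap (A := Module.End ℂ (TotSp N M))
    (PiTensorProduct.permEnd ℂ (Fin N → ℂ)) Sum.inr_injective Finset.univ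
    (a := Sum.inl 0) (b := Sum.inl 1) (by simp) (fun _ ↦ Sum.inr_ne_inl)
    (fun _ ↦ Sum.inr_ne_inl) d hu hv huv
  exact h
end

section
/- Suppose operators B_a(u) satisfy [B_a(u), B_b(v)] = (1/n) Σ_{j=0}^{n−1} [τ^j B_a(u) + B_b(v), (σ^j)_b P_{ab} (σ^{−j})_b / (u − τ^j v)] with τ^n = 1 and σ ∈ GL_N(ℂ). Then b(u) := Tr_a B_a(u) satisfies [b(u), B_b(v)] = 0 and [b(u), b(v)] = 0 for all admissible u, v. -/
/-!
On a block matrix `M : Matrix (Fin N) (Fin N) (Matrix (Fin N) (Fin N) A)` the outer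
`Matrix.trace` is the partial trace `Tr_a`. Apply it to the defining relation. On the left,
`Tr_a [X_a, Y_b] = [Tr X, Y]`. On the right every summand vanishes: `Tr_a (X_a P_{ab}) =
Tr_a (P_{ab} X_a) = X_b`, and the scalar factors `(σ^j)_b`, `(σ^{-j})_b` commute with `X_a`;
and `Tr_a [Y_b, M] = [Y, Tr_a M]` with `Tr_a ((σ^j)_b P_{ab} (σ^{-j})_b) = σ^j σ^{-j} = 1`.
Hence `Tr (B u)` commutes with every entry of `B v`, and so with `Tr (B v)`.
-/

open Finset

variable {N : ℕ} {A : Type*} [Ring A] [Algebra ℂ A]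

/-- A matrix placed in the first auxiliary space (identity in second). -/
def auxA {N : ℕ} {A : Type*} [Ring A] (T : Matrix (Fin N) (Fin N) A) :
    Matrix (Fin N) (Fin N) (Matrix (Fin N) (Fin N) A) :=
  T.map (fun x => Matrix.diagonal (fun _ => x))

/-- A matrix placed in the second auxiliary space (identity in first). -/
def auxB {N : ℕ} {A : Type*} [Ring A] (T : Matrix (Fin N) (Fin N) A) :
    Matrix (Fin N) (Fin N) (Matrix (Fin N) (Fin N) A) :=
  Matrix.diagonal (fun _ => T)

/-- The flip operator `P_{ab}` in the two auxiliary spaces. -/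
def flipAB (N : ℕ) (A : Type*) [Ring A] :
    Matrix (Fin N) (Fin N) (Matrix (Fin N) (Fin N) A) :=
  fun i j => fun k l => if i = l ∧ j = k then 1 else 0

/-- A scalar matrix `C` placed in the second auxiliary space: `(C)_b`. -/
def scalB (N : ℕ) (A : Type*) [Ring A] [Algebra ℂ A] (C : Matrix (Fin N) (Fin N) ℂ) :
    Matrix (Fin N) (Fin N) (Matrix (Fin N) (Fin N) A) :=
  Matrix.diagonal (fun _ => C.map (algebraMap ℂ A))

namespace AuxSpace

variable (C D : Matrix (Fin N) (Fin N) ℂ)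

/-- `(C)_b P_{ab} (D)_b`. -/
def twistedFlip : Matrix (Fin N) (Fin N) (Matrix (Fin N) (Fin N) A) :=
  scalB N A C * flipAB N A * scalB N A D

lemma twistedFlip_apply (a c p q : Fin N) :
    twistedFlip (A := A) C D a c p q = algebraMap ℂ A (C p c) * algebraMap ℂ A (D a q) := by
  simp [twistedFlip, scalB, flipAB, Matrix.mul_apply, Matrix.diagonal_apply, ite_and,
    apply_ite, ite_mul]

lemma trace_twistedFlip :
    (twistedFlip (A := A) C D).trace = (C * D).map (algebraMap ℂ A) := by
  ext p q
  simp [Matrix.trace, Matrix.sum_apply, twistedFlip_apply, Matrix.mul_apply]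

lemma trace_auxB_mul {R : Type*} [Ring R] (Y : Matrix (Fin N) (Fin N) R)
    (M : Matrix (Fin N) (Fin N) (Matrix (Fin N) (Fin N) R)) :
    (auxB Y * M).trace = Y * M.trace := by
  simp [auxB, Matrix.trace, Finset.mul_sum]

lemma trace_mul_auxB {R : Type*} [Ring R] (Y : Matrix (Fin N) (Fin N) R)
    (M : Matrix (Fin N) (Fin N) (Matrix (Fin N) (Fin N) R)) :
    (M * auxB Y).trace = M.trace * Y := by
  simp [auxB, Matrix.trace, Finset.sum_mul]

lemma trace_lie_auxB {R : Type*} [Ring R] (Y : Matrix (Fin N) (Fin N) R)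
    (M : Matrix (Fin N) (Fin N) (Matrix (Fin N) (Fin N) R)) :
    ⁅auxB Y, M⁆.trace = ⁅Y, M.trace⁆ := by
  rw [Ring.lie_def, Ring.lie_def, Matrix.trace_sub, trace_auxB_mul, trace_mul_auxB]

lemma trace_auxA {R : Type*} [Ring R] (X : Matrix (Fin N) (Fin N) R) :
    (auxA X).trace = Matrix.scalar (Fin N) X.trace := by
  ext p q
  by_cases hpq : p = q <;> simp [auxA, Matrix.trace, Matrix.sum_apply, hpq]

lemma trace_lie_auxA_auxB {R : Type*} [Ring R] (X Y : Matrix (Fin N) (Fin N) R) :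
    ⁅auxA X, auxB Y⁆.trace = ⁅Matrix.scalar (Fin N) X.trace, Y⁆ := by
  rw [Ring.lie_def, Ring.lie_def, Matrix.trace_sub, trace_mul_auxB, trace_auxB_mul, trace_auxA]

lemma trace_lie_auxA_twistedFlip (X : Matrix (Fin N) (Fin N) A) :
    ⁅auxA X, twistedFlip (A := A) C D⁆.trace = 0 := by
  ext p q
  simp only [Ring.lie_def, Matrix.sub_apply, Matrix.trace, Matrix.diag, Matrix.sum_apply,
    Matrix.mul_apply, auxA, Matrix.map_apply, Matrix.diagonal_apply, ite_mul, mul_ite, zero_mul,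
    mul_zero, Finset.sum_ite_eq, Finset.sum_ite_eq', Finset.mem_univ, if_true, twistedFlip_apply,
    Matrix.zero_apply, Finset.sum_sub_distrib]
  rw [sub_eq_zero, Finset.sum_comm]
  refine Finset.sum_congr rfl fun a _ => Finset.sum_congr rfl fun c _ => ?_
  rw [← map_mul, Algebra.commutes]

lemma trace_lie_auxB_twistedFlip (Y : Matrix (Fin N) (Fin N) A) (hCD : C * D = 1) :
    ⁅auxB Y, twistedFlip (A := A) C D⁆.trace = 0 := by
  rw [trace_lie_auxB, trace_twistedFlip, hCD, Matrix.map_one _ (map_zero _) (map_one _),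
    Ring.lie_def, mul_one, one_mul, sub_self]

lemma trace_lie_twistedFlip (X Y : Matrix (Fin N) (Fin N) A) (hCD : C * D = 1) (t c : ℂ) :
    ⁅t • auxA X + auxB Y, c • twistedFlip (A := A) C D⁆.trace = 0 := by
  have hlin : ⁅t • auxA X + auxB Y, c • twistedFlip (A := A) C D⁆
      = c • (t • ⁅auxA X, twistedFlip C D⁆ + ⁅auxB Y, twistedFlip C D⁆) := by
    simp only [Ring.lie_def, mul_smul_comm, smul_mul_assoc, add_mul, mul_add, smul_sub, smul_add]
    rw [smul_comm t c]
    abel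
  rw [hlin, Matrix.trace_smul, Matrix.trace_add, Matrix.trace_smul, trace_lie_auxA_twistedFlip,
    trace_lie_auxB_twistedFlip C D Y hCD, smul_zero, add_zero, smul_zero]

end AuxSpace

open AuxSpace in
theorem stmt13_general (n : ℕ) (τ : ℂ)
    (σ : (Matrix (Fin N) (Fin N) ℂ)ˣ) (S : Set ℂ)
    (B : ℂ → Matrix (Fin N) (Fin N) A)
    (hB : ∀ u v : ℂ, u ∉ S → v ∉ S → (∀ j < n, u ≠ τ ^ j * v) →
      ⁅auxA (B u), auxB (B v)⁆ =
        (n : ℂ)⁻¹ • ∑ j ∈ range n,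
          ⁅(τ ^ j) • auxA (B u) + auxB (B v),
            (u - τ ^ j * v)⁻¹ •
              (scalB N A ((σ ^ j : (Matrix (Fin N) (Fin N) ℂ)ˣ) : Matrix (Fin N) (Fin N) ℂ)
                * flipAB N A
                * scalB N A ((σ⁻¹ ^ j : (Matrix (Fin N) (Fin N) ℂ)ˣ) :
                    Matrix (Fin N) (Fin N) ℂ))⁆) :
    ∀ u v : ℂ, u ∉ S → v ∉ S → (∀ j < n, u ≠ τ ^ j * v) →
      (∀ i j : Fin N, Commute ((B u).trace) (B v i j)) ∧
      Commute ((B u).trace) ((B v).trace) := by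
  intro u v hu hv huv
  have hσ (j : ℕ) : ((σ ^ j : (Matrix (Fin N) (Fin N) ℂ)ˣ) : Matrix (Fin N) (Fin N) ℂ)
      * ((σ⁻¹ ^ j : (Matrix (Fin N) (Fin N) ℂ)ˣ) : Matrix (Fin N) (Fin N) ℂ) = 1 := by
    rw [← Units.val_mul, inv_pow, mul_inv_cancel, Units.val_one]
  have hlie : ⁅Matrix.scalar (Fin N) (B u).trace, B v⁆ = 0 := by
    rw [← trace_lie_auxA_auxB, hB u v hu hv huv, Matrix.trace_smul, Matrix.trace_sum,
      Finset.sum_eq_zero fun j _ => trace_lie_twistedFlip _ _ _ _ (hσ j) _ _, smul_zero]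
  have hentry (i j : Fin N) : Commute (B u).trace (B v i j) :=
    congrFun (congrFun (Matrix.scalar_commute_iff.mp (commute_iff_lie_eq.mpr hlie)) i) j
  exact ⟨hentry, Commute.sum_right _ _ _ fun i _ => hentry i i⟩

theorem stmt13 (n : ℕ) (hn : 1 ≤ n) (τ : ℂ) (hτ : τ ^ n = 1)
    (σ : (Matrix (Fin N) (Fin N) ℂ)ˣ) (S : Set ℂ)
    (B : ℂ → Matrix (Fin N) (Fin N) A)
    (hB : ∀ u v : ℂ, u ∉ S → v ∉ S → (∀ j < n, u ≠ τ ^ j * v) →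
      ⁅auxA (B u), auxB (B v)⁆ =
        (n : ℂ)⁻¹ • ∑ j ∈ range n,
          ⁅(τ ^ j) • auxA (B u) + auxB (B v),
            (u - τ ^ j * v)⁻¹ •
              (scalB N A ((σ ^ j : (Matrix (Fin N) (Fin N) ℂ)ˣ) : Matrix (Fin N) (Fin N) ℂ)
                * flipAB N A
                * scalB N A ((σ⁻¹ ^ j : (Matrix (Fin N) (Fin N) ℂ)ˣ) :
                    Matrix (Fin N) (Fin N) ℂ))⁆) :
    ∀ u v : ℂ, u ∉ S → v ∉ S → (∀ j < n, u ≠ τ ^ j * v) →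
      (∀ i j : Fin N, Commute ((B u).trace) (B v i j)) ∧
      Commute ((B u).trace) ((B v).trace) :=
  stmt13_general n τ σ S B hB
end
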